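/- arXiv:math/0510385 — 4 statements merged into one kernel-verified Lean document; each statement's English description precedes it below -/
import Mathlib

section
/- Let (A, φ) be any extended semi-module for a dominant μ ∈ ℕ^h with Σμᵢ = m, gcd(m,h)=1. Then |𝒱(A, φ)| ≤ d(b, μ), where 𝒱(A,φ) = {(a,b) ∈ A×A : b > a, φ(a) > φ(b) > φ(a−h)} and d(b,μ) = Σ_{i₀=1}^{h−1} Σ_{j=1}^{i₀}(m/h − μⱼ) − (h−1)/2. -/
/-- A semi-module for `m`, `h`: a nonempty subset of `ℤ`, bounded below,
closed under addition of `m` and of `h`. -/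
def IsSemiModule (m h : ℤ) (A : Set ℤ) : Prop :=
  A.Nonempty ∧ BddBelow A ∧ (∀ a ∈ A, a + m ∈ A) ∧ (∀ a ∈ A, a + h ∈ A)

/-- `B = A \ (h + A)`. -/
def BSet (h : ℤ) (A : Set ℤ) : Set ℤ := {a ∈ A | a - h ∉ A}

/-- A semi-module is normalized if the elements of `B = A \ (h+A)` sum to `h(h-1)/2`. -/
def IsNormalized (h : ℤ) (A : Set ℤ) : Prop :=
  ∃ s : Finset ℤ, ↑s = BSet h A ∧ ∑ a ∈ s, a = h * (h - 1) / 2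

/-- `max {n : ℕ | a + m - n h ∈ A}`. -/
noncomputable def maxShift (m h : ℤ) (A : Set ℤ) (a : ℤ) : ℕ :=
  sSup {n : ℕ | a + m - n * h ∈ A}

/-- The type of a normalized semi-module `A`:
`b 0 = min B`, and `b (i+1) = b i + m - μ' i · h` with `μ' i` the maximal
nonnegative integer such that `b (i+1) ∈ A`. -/
def HasType (m h : ℕ) (A : Set ℤ) (μ' : Fin h → ℕ) : Prop :=
  ∃ b : ℕ → ℤ,
    b 0 ∈ BSet h A ∧ (∀ x ∈ BSet h A, b 0 ≤ x) ∧
    ∀ i : Fin h,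
      b (i + 1) = b i + m - μ' i * h ∧ b (i + 1) ∈ A ∧
        b i + m - (μ' i + 1) * h ∉ A

/-- Partial sum of the first `i` entries of a vector in `ℕ^h`. -/
def psum {h : ℕ} (μ : Fin h → ℕ) (i : ℕ) : ℕ :=
  ∑ j : Fin h, if (j : ℕ) < i then μ j else 0

/-- Dominance order `ψ ⪯ χ` (with the paper's conventions, dominant vectors
are weakly increasing): all partial sums of `χ` are at most those of `ψ`,
with equal total sum. -/
def Dominates {h : ℕ} (ψ χ : Fin h → ℕ) : Prop :=
  (∀ i : ℕ, psum χ i ≤ psum ψ i) ∧ psum ψ h = psum χ h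

/-- An extended semi-module `(A, φ)` for `μ`. -/
def IsExtSemiModule (m h : ℕ) (A : Set ℤ) (φ : ℤ → WithBot ℕ) (μ : Fin h → ℕ) : Prop :=
  IsSemiModule m h A ∧ IsNormalized h A ∧
  (∀ a : ℤ, φ a = ⊥ ↔ a ∉ A) ∧
  (∀ a : ℤ, φ a + 1 ≤ φ (a + h)) ∧
  (∀ a ∈ A, φ a ≤ (maxShift m h A a : WithBot ℕ)) ∧
  (∀ a ∈ A, (∀ b : ℤ, a ≤ b → b ∈ A) → φ a = (maxShift m h A a : WithBot ℕ)) ∧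
  ∃ seq : Fin h → ℕ → ℤ,
    (∀ l j, seq l j ∈ A) ∧
    (∀ a ∈ A, ∃! p : Fin h × ℕ, seq p.1 p.2 = a) ∧
    (∀ l j, φ (seq l (j + 1)) = φ (seq l j) + 1) ∧
    (∀ l j, (φ (seq l j + h) = φ (seq l j) + 1 → seq l (j + 1) = seq l j + h) ∧
            (φ (seq l j + h) ≠ φ (seq l j) + 1 → seq l j + h < seq l (j + 1))) ∧
    ∃ σ : Equiv.Perm (Fin h), ∀ l, φ (seq l 0) = (μ (σ l) : WithBot ℕ)

/-- `(A, φ)` is cyclic: `φ a = max {n : a + m - n h ∈ A}` for all `a ∈ A`. -/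
def IsCyclicExt (m h : ℕ) (A : Set ℤ) (φ : ℤ → WithBot ℕ) : Prop :=
  ∀ a ∈ A, φ a = (maxShift m h A a : WithBot ℕ)

/-- The set `𝒱(A,φ) = {(a,b) ∈ A × A | b > a, φ a > φ b > φ (a - h)}`. -/
def Vset (h : ℕ) (A : Set ℤ) (φ : ℤ → WithBot ℕ) : Set (ℤ × ℤ) :=
  {p | p.1 ∈ A ∧ p.2 ∈ A ∧ p.1 < p.2 ∧ φ p.2 < φ p.1 ∧ φ (p.1 - h) < φ p.2}

/-- `d(b,μ) = Σ_{i=0}^{h-1} Σ_{j=1}^{i} (m/h - μ_j) - (h-1)/2`. -/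
def dval (m h : ℕ) (μ : Fin h → ℕ) : ℚ :=
  (∑ i ∈ Finset.range h, ((i * m : ℚ) / h - psum μ i)) - (h - 1) / 2

/-!
Write `ψ` for `φ` read as a natural number on `A`, and for a level `n` and a class `c` mod `h`
let `b n c` be the least `x ∈ A` of class `c` with `ψ x ≥ n`. From level `n` to `n + 1` the
classes with `ψ (b n c) = n` (the risers) move up by `h` and the others (the statics) stay; the
decomposition of `A` into sequences gives `#{i | μ i ≤ n}` risers. Each `(x, y) ∈ 𝒱(A, φ)` is
`(b n [x], b n [y])` for `n = ψ y`, with `[x]` static, `[y]` a riser and `x < y`: an up-pair.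
Every (static, riser) pair is an up-pair, a down-pair (riser more than `h` below) or a crossing
(riser less than `h` below), and there are `Σ_{i,j} (μ i - μ j)₊` of them over all levels. Past
the conductor the picture at level `M` is that at level `0` rotated by `m` and translated, so the
potential `Σ |b n c' - b n c| / h`, which moves by `+2` per up-pair and `-2` per down-pair, comes
back, and up- and down-pairs balance. The order of the classes also comes back rotated by `m`, a
generator mod `h`, so each of the `h - 1` cuts between the `k` lowest classes and the others is
crossed at least once. Hence `2 |𝒱| + (h - 1) ≤ Σ_{i,j} (μ i - μ j)₊ = 2 d(b, μ) + (h - 1)`.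
-/

open Finset

theorem Int.abs_add_ediv_sub_abs_ediv {h δ : ℤ} (hh : 0 < h) (hδ : ¬ h ∣ δ) :
    |δ + h| / h - |δ| / h = if 0 < δ then 1 else if δ + h < 0 then -1 else 0 := by
  have hδ0 : δ ≠ 0 := by rintro rfl; exact hδ (dvd_zero h)
  have hδh : δ + h ≠ 0 := fun e => hδ ⟨-1, by omega⟩
  split_ifs with hpos hneg
  · rw [abs_of_pos hpos, abs_of_pos (by omega), show δ + h = δ + 1 * h by ring,
      Int.add_mul_ediv_right _ _ hh.ne']
    ring
  · rw [abs_of_neg hneg, abs_of_neg (by omega : δ < 0),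
      show -(δ + h) = -δ + (-1) * h by ring, Int.add_mul_ediv_right _ _ hh.ne']
    ring
  · rw [abs_of_pos (by omega : 0 < δ + h), abs_of_neg (by omega : δ < 0),
      Int.ediv_eq_zero_of_lt (by omega) (by omega), Int.ediv_eq_zero_of_lt (by omega) (by omega)]
    rfl

theorem ZMod.exists_natCast_mul_eq {h : ℕ} [NeZero h] {s : ZMod h} (hs : IsUnit s)
    (y : ZMod h) : ∃ t : ℕ, t * s = y :=
  ⟨(y * ↑hs.unit⁻¹).val, by rw [ZMod.natCast_zmod_val, mul_assoc, hs.val_inv_mul, mul_one]⟩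

theorem Int.exists_eq_add_nat_mul_of_cast_eq {h : ℕ} (hh : 0 < h) {a x : ℤ}
    (hc : (a : ZMod h) = x) (hle : a ≤ x) : ∃ t : ℕ, x = a + t * h := by
  obtain ⟨t, ht⟩ := (ZMod.intCast_eq_intCast_iff_dvd_sub a x h).mp hc
  have ht0 : 0 ≤ t := by
    by_contra! hneg
    nlinarith [show (0 : ℤ) < h by exact_mod_cast hh]
  lift t to ℕ using ht0
  exact ⟨t, by linarith⟩

theorem add_nat_mul_mem_of_forall_add_mem {A : Set ℤ} {q : ℤ} (hq : ∀ a ∈ A, a + q ∈ A)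
    {a : ℤ} (ha : a ∈ A) (k : ℕ) : a + k * q ∈ A := by
  induction k with
  | zero => simpa using ha
  | succ k ih => simpa [add_mul, add_assoc] using hq _ ih

theorem ZMod.eq_univ_of_add_mem {h : ℕ} [NeZero h] {s : ZMod h} (hs : IsUnit s)
    {S : Finset (ZMod h)} (hS : ∀ c ∈ S, c + s ∈ S) (hne : S.Nonempty) : S = univ := by
  obtain ⟨c₀, hc₀⟩ := hne
  have hmul : ∀ t : ℕ, c₀ + t * s ∈ S := by
    intro t
    induction t with
    | zero => simpa using hc₀
    | succ t ih => simpa [add_mul, add_assoc] using hS _ ih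
  refine eq_univ_of_forall fun y => ?_
  obtain ⟨t, ht⟩ := ZMod.exists_natCast_mul_eq hs (y - c₀)
  simpa [ht] using hmul t

structure MarkerWalk (h : ℕ) where
  pos : ℕ → ZMod h → ℤ
  risers : ℕ → Finset (ZMod h)
  cast_pos : ∀ n c, (pos n c : ZMod h) = c
  pos_succ_of_mem : ∀ {n c}, c ∈ risers n → pos (n + 1) c = pos n c + h
  pos_succ_of_notMem : ∀ {n c}, c ∉ risers n → pos (n + 1) c = pos n c

namespace MarkerWalk

variable {h : ℕ} (W : MarkerWalk h)

theorem pos_injective (n : ℕ) : Function.Injective (W.pos n) := fun c c' e => by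
  rw [← W.cast_pos n c, ← W.cast_pos n c', e]

theorem pos_ne_pos_add {n : ℕ} {c c' : ZMod h} (hne : c ≠ c') : W.pos n c ≠ W.pos n c' + h :=
  fun e => hne <| by rw [← W.cast_pos n c, ← W.cast_pos n c', e]; push_cast; simp

theorem not_dvd_pos_sub {n : ℕ} {c c' : ZMod h} (hne : c ≠ c') :
    ¬ (h : ℤ) ∣ W.pos n c' - W.pos n c := by
  rw [← ZMod.intCast_eq_intCast_iff_dvd_sub, W.cast_pos, W.cast_pos]
  exact hne

theorem pos_le_pos_succ (n : ℕ) (c : ZMod h) : W.pos n c ≤ W.pos (n + 1) c := by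
  by_cases hc : c ∈ W.risers n
  · rw [W.pos_succ_of_mem hc]; omega
  · rw [W.pos_succ_of_notMem hc]

variable [NeZero h]

def upPairs (n : ℕ) : Finset (ZMod h × ZMod h) :=
  ((W.risers n)ᶜ ×ˢ W.risers n).filter fun p => W.pos n p.1 < W.pos n p.2

def downPairs (n : ℕ) : Finset (ZMod h × ZMod h) :=
  ((W.risers n)ᶜ ×ˢ W.risers n).filter fun p => W.pos n p.2 + h < W.pos n p.1

def crossPairs (n : ℕ) : Finset (ZMod h × ZMod h) :=
  ((W.risers n)ᶜ ×ˢ W.risers n).filter fun p =>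
    W.pos n p.2 < W.pos n p.1 ∧ W.pos n p.1 < W.pos n p.2 + h

theorem card_upPairs_add_card_downPairs_add_card_crossPairs (n : ℕ) :
    #(W.upPairs n) + #(W.downPairs n) + #(W.crossPairs n) = #(W.risers n)ᶜ * #(W.risers n) := by
  rw [← card_product, upPairs, downPairs, crossPairs, card_filter, card_filter, card_filter,
    ← sum_add_distrib, ← sum_add_distrib, card_eq_sum_ones]
  refine sum_congr rfl fun p hp => ?_
  rw [mem_product, mem_compl] at hp
  have hne : p.1 ≠ p.2 := fun e => hp.1 (e ▸ hp.2)
  have h1 := W.pos_injective n |>.ne hne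
  have h2 := W.pos_ne_pos_add (n := n) hne
  split_ifs <;> omega

def potential (n : ℕ) : ℤ := ∑ p : ZMod h × ZMod h, |W.pos n p.2 - W.pos n p.1| / h

/-- Only a (static, riser) pair changes its distance, by `h`; as its classes differ, `h ∤ δ`,
and `|δ| / h` moves by `±1` exactly for up- and down-pairs. -/
theorem potential_term_succ_sub (n : ℕ) (p : ZMod h × ZMod h) :
    |W.pos (n + 1) p.2 - W.pos (n + 1) p.1| / h - |W.pos n p.2 - W.pos n p.1| / h =
      ((if p ∈ W.upPairs n then 1 else 0) - (if p ∈ W.downPairs n then 1 else 0)) +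
      ((if p.swap ∈ W.upPairs n then 1 else 0) - (if p.swap ∈ W.downPairs n then 1 else 0)) := by
  obtain ⟨c, c'⟩ := p
  have hh : (0 : ℤ) < h := by exact_mod_cast NeZero.pos h
  simp only [upPairs, downPairs, mem_filter, mem_product, mem_compl, Prod.swap]
  by_cases hc : c ∈ W.risers n <;> by_cases hc' : c' ∈ W.risers n
  · simp [W.pos_succ_of_mem hc, W.pos_succ_of_mem hc', hc, hc']
  · have hne : c' ≠ c := fun e => hc' (e ▸ hc)
    have key := Int.abs_add_ediv_sub_abs_ediv hh (W.not_dvd_pos_sub (n := n) hne)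
    rw [W.pos_succ_of_mem hc, W.pos_succ_of_notMem hc', abs_sub_comm,
      show W.pos n c + h - W.pos n c' = W.pos n c - W.pos n c' + h by ring,
      abs_sub_comm (W.pos n c')]
    simp only [hc, hc', not_true_eq_false, not_false_eq_true, false_and, true_and, if_false]
    split_ifs at key ⊢ <;> omega
  · have hne : c ≠ c' := fun e => hc (e ▸ hc')
    have key := Int.abs_add_ediv_sub_abs_ediv hh (W.not_dvd_pos_sub (n := n) hne)
    rw [W.pos_succ_of_notMem hc, W.pos_succ_of_mem hc',
      show W.pos n c' + h - W.pos n c = W.pos n c' - W.pos n c + h by ring]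
    simp only [hc, hc', not_true_eq_false, not_false_eq_true, false_and, true_and, if_false]
    split_ifs at key ⊢ <;> omega
  · simp [W.pos_succ_of_notMem hc, W.pos_succ_of_notMem hc', hc, hc']

theorem potential_succ_sub (n : ℕ) :
    W.potential (n + 1) - W.potential n = 2 * (#(W.upPairs n) - #(W.downPairs n) : ℤ) := by
  set f : ZMod h × ZMod h → ℤ := fun p =>
    (if p ∈ W.upPairs n then 1 else 0) - (if p ∈ W.downPairs n then 1 else 0)
  have hswap : ∑ p : ZMod h × ZMod h, f p.swap = ∑ p, f p :=
    Fintype.sum_equiv (Equiv.prodComm _ _) _ _ fun _ => rfl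
  have hf : ∑ p, f p = #(W.upPairs n) - #(W.downPairs n) := by
    simp [f, sum_sub_distrib]
  rw [potential, potential, ← sum_sub_distrib]
  simp only [W.potential_term_succ_sub n]
  rw [sum_add_distrib, hswap, hf]
  ring

def rank (n : ℕ) (c : ZMod h) : ℕ := #{c' | W.pos n c' < W.pos n c}

theorem rank_lt_rank {n : ℕ} {c c' : ZMod h} (hlt : W.pos n c < W.pos n c') :
    W.rank n c < W.rank n c' := by
  refine card_lt_card ((ssubset_iff_of_subset fun x hx => ?_).mpr ⟨c, by simpa using hlt, by simp⟩)
  simp only [mem_filter, mem_univ, true_and] at hx ⊢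
  omega

theorem rank_injective (n : ℕ) : Function.Injective (W.rank n) := by
  intro c c' e
  rcases lt_trichotomy (W.pos n c) (W.pos n c') with hlt | heq | hlt
  · exact absurd e (W.rank_lt_rank hlt).ne
  · exact W.pos_injective n heq
  · exact absurd e (W.rank_lt_rank hlt).ne'

theorem rank_lt (n : ℕ) (c : ZMod h) : W.rank n c < h := by
  have := card_lt_card ((ssubset_iff_of_subset (subset_univ
    (univ.filter fun c' => W.pos n c' < W.pos n c))).mpr ⟨c, mem_univ c, by simp⟩)
  rwa [card_univ, ZMod.card] at this

def lowClasses (n k : ℕ) : Finset (ZMod h) := {c | W.rank n c < k}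

theorem card_lowClasses (n : ℕ) {k : ℕ} (hk : k ≤ h) : #(W.lowClasses n k) = k := by
  have himage : univ.image (W.rank n) = range h :=
    eq_of_subset_of_card_le (fun x hx => by
      obtain ⟨c, -, rfl⟩ := mem_image.mp hx
      exact mem_range.mpr (W.rank_lt n c))
      (by simp [card_image_of_injective _ (W.rank_injective n)])
  have : (W.lowClasses n k).image (W.rank n) = range k := by
    rw [lowClasses, ← filter_image (p := (· < k)), himage]
    ext x; simp only [mem_filter, mem_range]; omega
  rw [← card_image_of_injective _ (W.rank_injective n), this, card_range]

theorem rank_succ_le_of_notMem {n : ℕ} {c : ZMod h} (hc : c ∉ W.risers n) :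
    W.rank (n + 1) c ≤ W.rank n c := by
  refine card_le_card fun c' hc' => ?_
  simp only [mem_filter, mem_univ, true_and, W.pos_succ_of_notMem hc] at hc' ⊢
  exact lt_of_le_of_lt (W.pos_le_pos_succ n c') hc'

def crossFiber (n : ℕ) (c : ZMod h) : Finset (ZMod h) :=
  (W.risers n)ᶜ.filter fun c' => W.pos n c < W.pos n c' ∧ W.pos n c' < W.pos n c + h

theorem rank_succ_of_mem {n : ℕ} {c : ZMod h} (hc : c ∈ W.risers n) :
    W.rank (n + 1) c = W.rank n c + #(W.crossFiber n c) := by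
  have hsplit : univ.filter (fun c' => W.pos (n + 1) c' < W.pos (n + 1) c) =
      univ.filter (fun c' => W.pos n c' < W.pos n c) ∪ W.crossFiber n c := by
    ext c'
    simp only [crossFiber, mem_union, mem_filter, mem_univ, mem_compl, true_and,
      W.pos_succ_of_mem hc]
    by_cases hc' : c' ∈ W.risers n
    · simp only [W.pos_succ_of_mem hc', hc', not_true_eq_false, false_and, or_false]
      omega
    · have hne := (W.pos_injective n).ne fun e : c' = c => hc' (e ▸ hc)
      simp only [W.pos_succ_of_notMem hc', hc', not_false_eq_true, true_and]
      omega
  rw [rank, rank, hsplit, card_union_of_disjoint]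
  refine disjoint_left.mpr fun c' h1 h2 => ?_
  simp only [crossFiber, mem_filter, mem_univ, true_and] at h1 h2
  omega

theorem card_crossPairs (n : ℕ) :
    #(W.crossPairs n) = ∑ c ∈ W.risers n, #(W.crossFiber n c) := by
  simp only [crossPairs, crossFiber, card_filter, sum_product_right]

theorem card_lowClasses_changes_le (n : ℕ) :
    #{k ∈ Ioo 0 h | W.lowClasses n k ≠ W.lowClasses (n + 1) k} ≤ #(W.crossPairs n) := by
  have hsub : {k ∈ Ioo 0 h | W.lowClasses n k ≠ W.lowClasses (n + 1) k} ⊆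
      (W.risers n).biUnion fun c => Ioc (W.rank n c) (W.rank (n + 1) c) := by
    intro k hk
    simp only [mem_filter, mem_Ioo] at hk
    obtain ⟨⟨-, hkh⟩, hne⟩ := hk
    obtain ⟨c, hc, hc'⟩ : ∃ c ∈ W.lowClasses n k, c ∉ W.lowClasses (n + 1) k := by
      by_contra! hall
      exact hne (eq_of_subset_of_card_le hall
        (by rw [W.card_lowClasses n hkh.le, W.card_lowClasses (n + 1) hkh.le]))
    simp only [lowClasses, mem_filter, mem_univ, true_and, not_lt] at hc hc'
    have hrise : c ∈ W.risers n := by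
      by_contra hc''
      have := W.rank_succ_le_of_notMem hc''
      omega
    exact mem_biUnion.mpr ⟨c, hrise, mem_Ioc.mpr ⟨hc, hc'⟩⟩
  calc _ ≤ _ := card_le_card hsub
    _ ≤ ∑ c ∈ W.risers n, #(Ioc (W.rank n c) (W.rank (n + 1) c)) := card_biUnion_le
    _ = #(W.crossPairs n) := by
      rw [card_crossPairs]
      refine sum_congr rfl fun c hc => ?_
      rw [Nat.card_Ioc, W.rank_succ_of_mem hc]
      omega

variable {M : ℕ} {s : ZMod h} {d : ℤ}

theorem potential_eq_of_periodic (hper : ∀ c, W.pos M c = W.pos 0 (c + s) + d) :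
    W.potential M = W.potential 0 := by
  simp only [potential, hper, add_sub_add_right_eq_sub]
  exact Fintype.sum_equiv ((Equiv.addRight s).prodCongr (Equiv.addRight s)) _ _ fun _ => rfl

theorem rank_eq_of_periodic (hper : ∀ c, W.pos M c = W.pos 0 (c + s) + d) (c : ZMod h) :
    W.rank M c = W.rank 0 (c + s) := by
  simp only [rank, hper, add_lt_add_iff_right]
  exact card_equiv (Equiv.addRight s) fun c' => by simp

/-- A cut that never moved would make the `k` lowest classes at step `0` invariant under `+ s`. -/
theorem exists_lt_lowClasses_ne (hs : IsUnit s) (hper : ∀ c, W.pos M c = W.pos 0 (c + s) + d)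
    {k : ℕ} (hk : k ∈ Ioo 0 h) : ∃ n < M, W.lowClasses n k ≠ W.lowClasses (n + 1) k := by
  obtain ⟨hk0, hkh⟩ := mem_Ioo.mp hk
  by_contra! hcon
  have hconst : ∀ n ≤ M, W.lowClasses n k = W.lowClasses 0 k := by
    intro n hn
    induction n with
    | zero => rfl
    | succ n ih => rw [← hcon n (by omega), ih (by omega)]
  have huniv : W.lowClasses 0 k = univ := by
    refine ZMod.eq_univ_of_add_mem hs (fun c hc => ?_) ?_
    · rw [← hconst M le_rfl] at hc
      simpa [lowClasses, W.rank_eq_of_periodic hper] using hc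
    · rw [← card_pos, W.card_lowClasses 0 hkh.le]
      exact hk0
  have := W.card_lowClasses 0 hkh.le
  rw [huniv, card_univ, ZMod.card] at this
  omega

theorem sub_one_le_sum_card_crossPairs (hs : IsUnit s)
    (hper : ∀ c, W.pos M c = W.pos 0 (c + s) + d) :
    h - 1 ≤ ∑ n ∈ range M, #(W.crossPairs n) := by
  have hsub : Ioo 0 h ⊆ (range M).biUnion fun n =>
      {k ∈ Ioo 0 h | W.lowClasses n k ≠ W.lowClasses (n + 1) k} := fun k hk => by
    obtain ⟨n, hn, hne⟩ := W.exists_lt_lowClasses_ne hs hper hk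
    exact mem_biUnion.mpr ⟨n, mem_range.mpr hn, mem_filter.mpr ⟨hk, hne⟩⟩
  calc h - 1 = #(Ioo 0 h) := by simp
    _ ≤ _ := card_le_card hsub
    _ ≤ _ := card_biUnion_le
    _ ≤ _ := sum_le_sum fun n _ => W.card_lowClasses_changes_le n

theorem sum_card_upPairs_eq_sum_card_downPairs (hper : ∀ c, W.pos M c = W.pos 0 (c + s) + d) :
    ∑ n ∈ range M, #(W.upPairs n) = ∑ n ∈ range M, #(W.downPairs n) := by
  have htelescope := sum_range_sub W.potential M
  simp only [W.potential_succ_sub, W.potential_eq_of_periodic hper, sub_self, ← mul_sum,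
    sum_sub_distrib] at htelescope
  have : ∑ n ∈ range M, (#(W.upPairs n) : ℤ) = ∑ n ∈ range M, (#(W.downPairs n) : ℤ) := by
    linarith
  exact_mod_cast this

theorem two_mul_sum_card_upPairs_add_le (hs : IsUnit s)
    (hper : ∀ c, W.pos M c = W.pos 0 (c + s) + d) :
    2 * ∑ n ∈ range M, #(W.upPairs n) + (h - 1) ≤
      ∑ n ∈ range M, #(W.risers n)ᶜ * #(W.risers n) := by
  have hbalance := W.sum_card_upPairs_eq_sum_card_downPairs hper
  have hcross := W.sub_one_le_sum_card_crossPairs hs hper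
  simp only [← W.card_upPairs_add_card_downPairs_add_card_crossPairs, sum_add_distrib]
  omega

end MarkerWalk

section SemiModule

variable {m h : ℕ} {A : Set ℤ}

namespace IsSemiModule

variable (hA : IsSemiModule m h A)
include hA

theorem mem_of_cast_eq_of_le (hh : 0 < h) {a x : ℤ} (ha : a ∈ A) (hc : (a : ZMod h) = x)
    (hle : a ≤ x) : x ∈ A := by
  obtain ⟨t, rfl⟩ := Int.exists_eq_add_nat_mul_of_cast_eq hh hc hle
  exact add_nat_mul_mem_of_forall_add_mem hA.2.2.2 ha t

theorem exists_mem_cast_eq [NeZero h] (hcop : m.Coprime h) (c : ZMod h) :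
    ∃ a ∈ A, (a : ZMod h) = c := by
  obtain ⟨a₀, ha₀⟩ := hA.1
  obtain ⟨t, ht⟩ := ZMod.exists_natCast_mul_eq ((ZMod.isUnit_iff_coprime m h).mpr hcop) (c - a₀)
  refine ⟨a₀ + t * m, add_nat_mul_mem_of_forall_add_mem hA.2.2.1 ha₀ t, ?_⟩
  push_cast
  rw [ht, add_sub_cancel]

theorem eventually_mem [NeZero h] (hcop : m.Coprime h) : ∀ᶠ x in Filter.atTop, x ∈ A := by
  have hcls : ∀ c : ZMod h, ∀ᶠ x : ℤ in Filter.atTop, (x : ZMod h) = c → x ∈ A := fun c => by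
    obtain ⟨a, ha, hac⟩ := hA.exists_mem_cast_eq hcop c
    filter_upwards [Filter.eventually_ge_atTop a] with x hx hxc
    exact hA.mem_of_cast_eq_of_le (NeZero.pos h) ha (hac.trans hxc.symm) hx
  filter_upwards [Filter.eventually_all.mpr hcls] with x hx using hx _ rfl

theorem bddAbove_shifts (hh : 0 < h) (a : ℤ) : BddAbove {n : ℕ | a + m - n * h ∈ A} := by
  obtain ⟨L, hL⟩ := hA.2.1
  refine ⟨(a + m - L).toNat, fun n hn => ?_⟩
  have h1 : L ≤ a + m - n * h := hL hn
  have h2 : (n : ℤ) ≤ n * h := le_mul_of_one_le_right (by positivity) (by exact_mod_cast hh)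
  omega

theorem le_maxShift (hh : 0 < h) {a : ℤ} {n : ℕ} (hn : a + m - n * h ∈ A) :
    n ≤ maxShift m h A a :=
  le_csSup (hA.bddAbove_shifts hh a) hn

theorem sub_mul_mem_of_le_maxShift (hh : 0 < h) {a : ℤ} (ha : a ∈ A) {n : ℕ}
    (hn : n ≤ maxShift m h A a) : a + m - n * h ∈ A := by
  have hmax : a + m - maxShift m h A a * h ∈ A :=
    Nat.sSup_mem ⟨0, by simpa using hA.2.2.1 a ha⟩ (hA.bddAbove_shifts hh a)
  have := add_nat_mul_mem_of_forall_add_mem hA.2.2.2 hmax (maxShift m h A a - n)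
  convert this using 1
  push_cast [hn]
  ring

end IsSemiModule

def levelClass (A : Set ℤ) (ψ : ℤ → ℕ) (n : ℕ) {h : ℕ} (c : ZMod h) : Set ℤ :=
  {x | x ∈ A ∧ n ≤ ψ x ∧ (x : ZMod h) = c}

noncomputable def levelMin (A : Set ℤ) (ψ : ℤ → ℕ) (n : ℕ) {h : ℕ} (c : ZMod h) : ℤ :=
  sInf (levelClass A ψ n c)

namespace IsSemiModule

variable {ψ : ℤ → ℕ} (hA : IsSemiModule m h A) (hψ : ∀ a ∈ A, ψ a + 1 ≤ ψ (a + h))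
include hA hψ

theorem le_level_add_nat_mul {a : ℤ} (ha : a ∈ A) (k : ℕ) : ψ a + k ≤ ψ (a + k * h) := by
  induction k with
  | zero => simp
  | succ k ih =>
    have := hψ _ (add_nat_mul_mem_of_forall_add_mem hA.2.2.2 ha k)
    rw [add_assoc, ← add_one_mul] at this
    push_cast
    omega

theorem level_le_of_cast_eq (hh : 0 < h) {a x : ℤ} (ha : a ∈ A) (hc : (a : ZMod h) = x)
    (hle : a ≤ x) : ψ a ≤ ψ x := by
  obtain ⟨t, rfl⟩ := Int.exists_eq_add_nat_mul_of_cast_eq hh hc hle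
  exact (Nat.le_add_right _ _).trans (hA.le_level_add_nat_mul hψ ha t)

theorem levelClass_nonempty [NeZero h] (hcop : m.Coprime h) (n : ℕ) (c : ZMod h) :
    (levelClass A ψ n c).Nonempty := by
  obtain ⟨a, ha, hac⟩ := hA.exists_mem_cast_eq hcop c
  refine ⟨a + n * h, add_nat_mul_mem_of_forall_add_mem hA.2.2.2 ha n,
    (Nat.le_add_left _ _).trans (hA.le_level_add_nat_mul hψ ha n), ?_⟩
  simp [hac]

theorem levelMin_mem [NeZero h] (hcop : m.Coprime h) (n : ℕ) (c : ZMod h) :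
    levelMin A ψ n c ∈ levelClass A ψ n c :=
  Int.csInf_mem (hA.levelClass_nonempty hψ hcop n c) (hA.2.1.mono fun _ hx => hx.1)

omit hψ in
theorem levelMin_le {n : ℕ} {c : ZMod h} {x : ℤ} (hx : x ∈ levelClass A ψ n c) :
    levelMin A ψ n c ≤ x :=
  csInf_le (hA.2.1.mono fun _ hx => hx.1) hx

theorem level_sub_lt_of_levelMin [NeZero h] (hcop : m.Coprime h) {n : ℕ} {c : ZMod h}
    (hmem : levelMin A ψ n c - h ∈ A) : ψ (levelMin A ψ n c - h) < n := by
  by_contra! hge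
  have hx := hA.levelMin_le (c := c) ⟨hmem, hge, by
    simpa using (hA.levelMin_mem hψ hcop n c).2.2⟩
  have : (0 : ℤ) < h := by exact_mod_cast NeZero.pos h
  omega

theorem levelMin_eq_of_gap (hh : 0 < h) {n : ℕ} {a : ℤ} (ha : a ∈ A) (hn : n ≤ ψ a)
    (hgap : a - h ∈ A → ψ (a - h) < n) : levelMin A ψ n (a : ZMod h) = a := by
  have hcls : a ∈ levelClass A ψ n (a : ZMod h) := ⟨ha, hn, rfl⟩
  refine le_antisymm (hA.levelMin_le hcls) (not_lt.mp fun hlt => ?_)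
  obtain ⟨hyA, hyn, hyc⟩ : levelMin A ψ n (a : ZMod h) ∈ levelClass A ψ n (a : ZMod h) :=
    Int.csInf_mem ⟨a, hcls⟩ (hA.2.1.mono fun _ hx => hx.1)
  obtain ⟨t, ht⟩ := Int.exists_eq_add_nat_mul_of_cast_eq hh hyc hlt.le
  have ht1 : 1 ≤ t := by
    rcases t with _ | t
    · simp at ht; omega
    · omega
  have hle : levelMin A ψ n (a : ZMod h) ≤ a - h := by
    nlinarith [show (1 : ℤ) ≤ t by exact_mod_cast ht1, show (0 : ℤ) < h by exact_mod_cast hh]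
  have hyc' : (levelMin A ψ n (a : ZMod h) : ZMod h) = ((a - h : ℤ) : ZMod h) := by simpa using hyc
  have hmem := hA.mem_of_cast_eq_of_le hh hyA hyc' hle
  have := hA.level_le_of_cast_eq hψ hh hyA hyc' hle
  have := hgap hmem
  omega

theorem levelMin_eq_of_level_eq (hh : 0 < h) {n : ℕ} {a : ℤ} (ha : a ∈ A) (hn : ψ a = n) :
    levelMin A ψ n (a : ZMod h) = a :=
  hA.levelMin_eq_of_gap hψ hh ha hn.ge fun hmem => by
    have := hψ _ hmem
    rw [sub_add_cancel] at this
    omega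

theorem levelMin_succ_of_level_eq [NeZero h] (hcop : m.Coprime h) {n : ℕ} {c : ZMod h}
    (hc : ψ (levelMin A ψ n c) = n) : levelMin A ψ (n + 1) c = levelMin A ψ n c + h := by
  obtain ⟨hA', -, hcast⟩ := hA.levelMin_mem hψ hcop n c
  have := hA.levelMin_eq_of_gap hψ (NeZero.pos h) (n := n + 1) (hA.2.2.2 _ hA')
    (by have := hψ _ hA'; omega) (fun _ => by rw [add_sub_cancel_right]; omega)
  simpa [hcast] using this

theorem levelMin_succ_of_level_ne [NeZero h] (hcop : m.Coprime h) {n : ℕ} {c : ZMod h}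
    (hc : ψ (levelMin A ψ n c) ≠ n) : levelMin A ψ (n + 1) c = levelMin A ψ n c := by
  obtain ⟨hA', hn, hcast⟩ := hA.levelMin_mem hψ hcop n c
  have := hA.levelMin_eq_of_gap hψ (NeZero.pos h) (n := n + 1) hA' (by omega)
    (fun hmem => (hA.level_sub_lt_of_levelMin hψ hcop hmem).trans (Nat.lt_succ_self n))
  rwa [hcast] at this

variable [NeZero h] (hcop : m.Coprime h)

noncomputable def levelWalk : MarkerWalk h where
  pos n c := levelMin A ψ n c
  risers n := {c | ψ (levelMin A ψ n c) = n}
  cast_pos n c := (hA.levelMin_mem hψ hcop n c).2.2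
  pos_succ_of_mem hc := hA.levelMin_succ_of_level_eq hψ hcop (by simpa using hc)
  pos_succ_of_notMem hc := hA.levelMin_succ_of_level_ne hψ hcop (by simpa using hc)

@[simp]
theorem levelWalk_pos (n : ℕ) (c : ZMod h) : (hA.levelWalk hψ hcop).pos n c = levelMin A ψ n c :=
  rfl

@[simp]
theorem mem_levelWalk_risers {n : ℕ} {c : ZMod h} :
    c ∈ (hA.levelWalk hψ hcop).risers n ↔ ψ (levelMin A ψ n c) = n := by
  simp [levelWalk]

include hcop

/-- Past the conductor `ψ = maxShift`, so `x ↦ x + m - M h` matches the level-`M` part of class `c`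
with the level-`0` part of class `c + m`. -/
theorem eventually_levelMin_eq (hle : ∀ a ∈ A, ψ a ≤ maxShift m h A a)
    (htail : ∀ a ∈ A, (∀ b, a ≤ b → b ∈ A) → ψ a = maxShift m h A a) :
    ∀ᶠ M in Filter.atTop, ∀ c : ZMod h,
      levelMin A ψ M c = levelMin A ψ 0 (c + (m : ZMod h)) + (M * h - m) := by
  have hh := NeZero.pos h
  obtain ⟨N, hN⟩ := Filter.eventually_atTop.mp (hA.eventually_mem hcop)
  refine Filter.eventually_all.mpr fun c => ?_
  obtain ⟨hr, -, hrc⟩ := hA.levelMin_mem hψ hcop 0 (c + (m : ZMod h))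
  set r := levelMin A ψ 0 (c + (m : ZMod h))
  filter_upwards [Filter.eventually_ge_atTop (N - r + m).toNat] with M hM
  have hx : N ≤ r + (M * h - m) := by
    have : (M : ℤ) ≤ M * h := le_mul_of_one_le_right (by positivity) (by exact_mod_cast hh)
    omega
  have hxA : ∀ b, r + (M * h - m) ≤ b → b ∈ A := fun b hb => hN b (hx.trans hb)
  have hlevel : M ≤ ψ (r + (M * h - m)) := by
    rw [htail _ (hxA _ le_rfl) hxA]
    exact hA.le_maxShift hh (by convert hr using 1; ring)
  refine le_antisymm (hA.levelMin_le ⟨hxA _ le_rfl, hlevel, by push_cast [hrc]; simp⟩) ?_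
  obtain ⟨hyA, hyM, hyc⟩ := hA.levelMin_mem hψ hcop M c
  have := hA.levelMin_le (ψ := ψ) (n := 0) (c := c + (m : ZMod h))
    ⟨hA.sub_mul_mem_of_le_maxShift hh hyA (hyM.trans (hle _ hyA)), Nat.zero_le _, by simp [hyc]⟩
  linarith

/-- The element of level `n` of the sequence `l` is the level-`n` minimum of its class. -/
theorem card_filter_level_levelMin_eq {ι : Type*} [Fintype ι] {seq : ι → ℕ → ℤ} {ν : ι → ℕ}
    (hseqA : ∀ l j, seq l j ∈ A) (hcover : ∀ a ∈ A, ∃! p : ι × ℕ, seq p.1 p.2 = a)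
    (hlevel : ∀ l j, ψ (seq l j) = ν l + j) (n : ℕ) :
    #{c : ZMod h | ψ (levelMin A ψ n c) = n} = #{l | ν l ≤ n} := by
  have hmin : ∀ l, ν l ≤ n → levelMin A ψ n (seq l (n - ν l) : ZMod h) = seq l (n - ν l) :=
    fun l hl => hA.levelMin_eq_of_level_eq hψ (NeZero.pos h) (hseqA _ _) (by rw [hlevel]; omega)
  refine (card_bij (fun l _ => (seq l (n - ν l) : ZMod h)) (fun l hl => ?_)
    (fun l₁ hl₁ l₂ hl₂ he => ?_) (fun c hc => ?_)).symm
  · simp only [mem_filter, mem_univ, true_and] at hl ⊢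
    rw [hmin l hl, hlevel]
    omega
  · simp only [mem_filter, mem_univ, true_and] at hl₁ hl₂
    have heq : seq l₁ (n - ν l₁) = seq l₂ (n - ν l₂) := by
      rw [← hmin l₁ hl₁, ← hmin l₂ hl₂, he]
    obtain ⟨p, -, huniq⟩ := hcover _ (hseqA l₁ (n - ν l₁))
    exact congrArg Prod.fst ((huniq (l₁, _) rfl).trans (huniq (l₂, _) heq.symm).symm)
  · simp only [mem_filter, mem_univ, true_and] at hc
    obtain ⟨hmem, -, hcast⟩ := hA.levelMin_mem hψ hcop n c
    obtain ⟨⟨l, j⟩, hlj, -⟩ := hcover _ hmem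
    have hj := hlevel l j
    rw [hlj, hc] at hj
    refine ⟨l, by simp only [mem_filter, mem_univ, true_and]; omega, ?_⟩
    rw [show n - ν l = j by omega, hlj, hcast]

theorem exists_mem_upPairs_of_mem_Vset {φ : ℤ → WithBot ℕ} (hφ : ∀ a ∈ A, φ a = ψ a) {M : ℕ}
    (hM : ∀ n, M ≤ n → ∀ c : ZMod h, ψ (levelMin A ψ n c) = n) {a b : ℤ}
    (hab : (a, b) ∈ Vset h A φ) : ∃ n < M, ∃ p ∈ (hA.levelWalk hψ hcop).upPairs n,
      (levelMin A ψ n p.1, levelMin A ψ n p.2) = (a, b) := by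
  obtain ⟨ha, hb, hlt, hφba, hφa⟩ := hab
  have hh := NeZero.pos h
  rw [hφ a ha, hφ b hb, Nat.cast_lt] at hφba
  have hgap : a - h ∈ A → ψ (a - h) < ψ b := fun hmem => by
    rwa [hφ _ hmem, hφ b hb, Nat.cast_lt] at hφa
  have hposa : levelMin A ψ (ψ b) (a : ZMod h) = a := hA.levelMin_eq_of_gap hψ hh ha hφba.le hgap
  have hposb : levelMin A ψ (ψ b) (b : ZMod h) = b := hA.levelMin_eq_of_level_eq hψ hh hb rfl
  have hstatic : (a : ZMod h) ∉ (hA.levelWalk hψ hcop).risers (ψ b) := by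
    rw [mem_levelWalk_risers, hposa]; omega
  have hrise : (b : ZMod h) ∈ (hA.levelWalk hψ hcop).risers (ψ b) := by
    rw [mem_levelWalk_risers, hposb]
  refine ⟨ψ b, not_le.mp fun hge => hstatic ((mem_levelWalk_risers ..).mpr (hM _ hge _)),
    ((a : ZMod h), (b : ZMod h)), ?_, by simp [hposa, hposb]⟩
  exact mem_filter.mpr ⟨mem_product.mpr ⟨mem_compl.mpr hstatic, hrise⟩, by simpa [hposa, hposb]⟩

theorem ncard_Vset_le {φ : ℤ → WithBot ℕ} (hφ : ∀ a ∈ A, φ a = ψ a) {M : ℕ}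
    (hM : ∀ n, M ≤ n → ∀ c : ZMod h, ψ (levelMin A ψ n c) = n) :
    (Vset h A φ).ncard ≤ ∑ n ∈ range M, #((hA.levelWalk hψ hcop).upPairs n) := by
  have hsub : Vset h A φ ⊆ ↑((range M).biUnion fun n => ((hA.levelWalk hψ hcop).upPairs n).image
      fun p => (levelMin A ψ n p.1, levelMin A ψ n p.2)) := by
    rintro ⟨a, b⟩ hab
    obtain ⟨n, hn, p, hp, hpab⟩ := hA.exists_mem_upPairs_of_mem_Vset hψ hcop hφ hM hab
    simp only [coe_biUnion, coe_image, mem_range, Set.mem_iUnion, Set.mem_image, mem_coe]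
    exact ⟨n, hn, p, hp, hpab⟩
  calc (Vset h A φ).ncard ≤ _ := by
        simpa only [Set.ncard_coe_finset] using Set.ncard_le_ncard hsub (finite_toSet _)
    _ ≤ _ := card_biUnion_le
    _ ≤ _ := sum_le_sum fun n _ => card_image_le

end IsSemiModule

end SemiModule

theorem sum_range_card_lt_mul_card_le {ι : Type*} [Fintype ι] (μ : ι → ℕ) {M : ℕ}
    (hM : ∀ i, μ i ≤ M) :
    ∑ n ∈ range M, #{i | n < μ i} * #{j | μ j ≤ n} = ∑ i, ∑ j, (μ i - μ j) := by
  have hprod : ∀ n, #{i | n < μ i} * #{j | μ j ≤ n} =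
      ∑ p : ι × ι, if n < μ p.1 ∧ μ p.2 ≤ n then 1 else 0 := fun n => by
    rw [← card_product, ← filter_product, card_filter, univ_product_univ]
  simp only [hprod]
  rw [sum_comm, Fintype.sum_prod_type]
  refine sum_congr rfl fun i _ => sum_congr rfl fun j _ => ?_
  rw [← card_filter, show {n ∈ range M | n < μ i ∧ μ j ≤ n} = Ico (μ j) (μ i) by
    ext n; simp only [mem_filter, mem_range, mem_Ico]; have := hM i; omega, Nat.card_Ico]

theorem sum_sum_tsub_add_two_mul_sum_psum {h : ℕ} {μ : Fin h → ℕ} (hμ : Monotone μ) :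
    ∑ i, ∑ j, (μ i - μ j) + 2 * ∑ i ∈ range h, psum μ i = (h - 1) * psum μ h := by
  calc ∑ i, ∑ j, (μ i - μ j) + 2 * ∑ i ∈ range h, psum μ i
      = ∑ i, ∑ j, ((if j < i then μ i else 0) + (if j < i then μ j else 0)) := by
        rw [← Fin.sum_univ_eq_sum_range, mul_sum, ← sum_add_distrib]
        refine sum_congr rfl fun i _ => ?_
        rw [psum, mul_sum, ← sum_add_distrib]
        refine sum_congr rfl fun j _ => ?_
        simp only [Fin.val_fin_lt]
        split_ifs with hji
        · have := hμ hji.le; omega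
        · have := hμ (not_lt.mp hji); omega
    _ = ∑ i, ∑ j, ((if j < i then μ i else 0) + (if i < j then μ i else 0)) := by
        simp only [sum_add_distrib]
        rw [sum_comm (f := fun i j => if j < i then μ j else 0)]
    _ = ∑ i, (h - 1) * μ i := by
        refine sum_congr rfl fun i _ => ?_
        have hterm : ∀ j, (if j < i then μ i else 0) + (if i < j then μ i else 0) =
            if j ≠ i then μ i else 0 := fun j => by
          rcases lt_trichotomy j i with hji | rfl | hij
          · simp [hji, hji.ne, hji.not_gt]
          · simp
          · simp [hij, hij.ne', hij.not_gt]
        simp only [hterm, ← sum_filter, sum_const, filter_ne', card_erase_of_mem (mem_univ i),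
          card_univ, Fintype.card_fin, smul_eq_mul]
    _ = (h - 1) * psum μ h := by
        rw [← mul_sum, psum]
        simp

theorem dval_eq {m h : ℕ} (hh : 0 < h) {μ : Fin h → ℕ} (hμ : Monotone μ) (hsum : psum μ h = m) :
    dval m h μ = (∑ i, ∑ j, ((μ i - μ j : ℕ) : ℚ) - (h - 1)) / 2 := by
  have key := congrArg (Nat.cast (R := ℚ)) (sum_sum_tsub_add_two_mul_sum_psum hμ)
  have gauss := congrArg (Nat.cast (R := ℚ)) (sum_range_id_mul_two h)
  push_cast [Nat.cast_pred hh, hsum] at key gauss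
  have hlinear : ∑ i ∈ range h, ((i * m : ℚ) / h) = (h - 1) * m / 2 := by
    rw [← sum_div, ← sum_mul]
    field_simp
    linear_combination m * gauss
  rw [dval, sum_sub_distrib, hlinear]
  linear_combination (-1 / 2 : ℚ) * key

-- `0` off `A`, where `φ = ⊥`.
def level (φ : ℤ → WithBot ℕ) (a : ℤ) : ℕ := (φ a).unbotD 0

namespace IsExtSemiModule

variable {m h : ℕ} {A : Set ℤ} {φ : ℤ → WithBot ℕ} {μ : Fin h → ℕ}
  (hE : IsExtSemiModule m h A φ μ)
include hE

theorem coe_level {a : ℤ} (ha : a ∈ A) : φ a = level φ a := by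
  obtain ⟨k, hk⟩ := WithBot.ne_bot_iff_exists.mp (mt (hE.2.2.1 a).mp (not_not.mpr ha))
  simp [level, ← hk, Nat.cast_withBot]

theorem level_add_le {a : ℤ} (ha : a ∈ A) : level φ a + 1 ≤ level φ (a + h) := by
  have := hE.2.2.2.1 a
  rw [hE.coe_level ha, hE.coe_level (hE.1.2.2.2 a ha)] at this
  exact_mod_cast this

theorem level_le_maxShift {a : ℤ} (ha : a ∈ A) : level φ a ≤ maxShift m h A a := by
  have := hE.2.2.2.2.1 a ha
  rwa [hE.coe_level ha, Nat.cast_le] at this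

theorem level_eq_maxShift {a : ℤ} (ha : a ∈ A) (htail : ∀ b, a ≤ b → b ∈ A) :
    level φ a = maxShift m h A a := by
  have := hE.2.2.2.2.2.1 a ha htail
  rwa [hE.coe_level ha, Nat.cast_inj] at this

theorem card_filter_level_levelMin_eq [NeZero h] (hcop : m.Coprime h) (n : ℕ) :
    #{c : ZMod h | level φ (levelMin A (level φ) n c) = n} = #{i | μ i ≤ n} := by
  obtain ⟨seq, hseqA, hcover, hseqφ, -, σ, hinit⟩ := hE.2.2.2.2.2.2
  have hlevel : ∀ l j, level φ (seq l j) = μ (σ l) + j := by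
    intro l j
    induction j with
    | zero => simpa [← Nat.cast_inj (R := WithBot ℕ), ← hE.coe_level (hseqA l 0)] using hinit l
    | succ j ih =>
      have := hseqφ l j
      rw [hE.coe_level (hseqA _ _), hE.coe_level (hseqA _ _), ih] at this
      exact_mod_cast this
  rw [hE.1.card_filter_level_levelMin_eq (fun _ => hE.level_add_le) hcop hseqA hcover hlevel n]
  exact card_equiv σ fun l => by simp

theorem level_levelMin_eq_of_forall_le [NeZero h] (hcop : m.Coprime h) {n : ℕ}
    (hn : ∀ i, μ i ≤ n) (c : ZMod h) : level φ (levelMin A (level φ) n c) = n := by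
  have hcard := hE.card_filter_level_levelMin_eq hcop n
  rw [filter_true_of_mem fun i _ => hn i, card_univ, Fintype.card_fin] at hcard
  have huniv := eq_univ_of_card _ (hcard.trans (ZMod.card h).symm)
  simpa using eq_univ_iff_forall.mp huniv c

theorem two_mul_ncard_Vset_add_le [NeZero h] (hcop : m.Coprime h) :
    2 * (Vset h A φ).ncard + (h - 1) ≤ ∑ i, ∑ j, (μ i - μ j) := by
  have hψ : ∀ a ∈ A, level φ a + 1 ≤ level φ (a + h) := fun _ => hE.level_add_le
  obtain ⟨M, hper, hsupM⟩ := ((hE.1.eventually_levelMin_eq hψ hcop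
    (fun _ => hE.level_le_maxShift) (fun _ => hE.level_eq_maxShift)).and
    (Filter.eventually_ge_atTop (univ.sup μ))).exists
  have hμM : ∀ i, μ i ≤ M := fun i => (le_sup (mem_univ i)).trans hsupM
  set W := hE.1.levelWalk hψ hcop
  calc 2 * (Vset h A φ).ncard + (h - 1) ≤ 2 * ∑ n ∈ range M, #(W.upPairs n) + (h - 1) := by
        gcongr
        exact hE.1.ncard_Vset_le hψ hcop (fun _ => hE.coe_level)
          fun n hn => hE.level_levelMin_eq_of_forall_le hcop fun i => (hμM i).trans hn
    _ ≤ ∑ n ∈ range M, #(W.risers n)ᶜ * #(W.risers n) :=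
        W.two_mul_sum_card_upPairs_add_le ((ZMod.isUnit_iff_coprime m h).mpr hcop) hper
    _ = ∑ n ∈ range M, #{i | n < μ i} * #{j | μ j ≤ n} := by
        refine sum_congr rfl fun n _ => ?_
        have hrisers : #(W.risers n) = #{j | μ j ≤ n} := hE.card_filter_level_levelMin_eq hcop n
        have hsplit := card_filter_add_card_filter_not (s := univ) fun i : Fin h => μ i ≤ n
        simp only [not_le, card_univ, Fintype.card_fin] at hsplit
        rw [card_compl, hrisers, ZMod.card]
        congr 1
        omega
    _ = ∑ i, ∑ j, (μ i - μ j) := sum_range_card_lt_mul_card_le μ hμM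

end IsExtSemiModule

theorem V_card_le_dval_general (m h : ℕ) (hh : 0 < h)
    (hcop : Nat.Coprime m h) (μ : Fin h → ℕ) (hμ : Monotone μ)
    (hsum : psum μ h = m) (A : Set ℤ) (φ : ℤ → WithBot ℕ)
    (hext : IsExtSemiModule m h A φ μ) :
    ((Vset h A φ).ncard : ℚ) ≤ dval m h μ := by
  have : NeZero h := ⟨hh.ne'⟩
  have key : (2 * (Vset h A φ).ncard + (h - 1) : ℕ) ≤ ∑ i, ∑ j, (μ i - μ j) :=
    hext.two_mul_ncard_Vset_add_le hcop
  rw [dval_eq hh hμ hsum]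
  have key' := (Nat.cast_le (α := ℚ)).mpr key
  push_cast [Nat.cast_pred hh] at key'
  linarith

/-- for any extended semi-module `(A,φ)` for dominant `μ`,
`|𝒱(A,φ)| ≤ d(b,μ)`. -/
theorem V_card_le_dval (m h : ℕ) (hm : 0 < m) (hh : 0 < h)
    (hcop : Nat.Coprime m h) (μ : Fin h → ℕ) (hμ : Monotone μ)
    (hsum : psum μ h = m) (A : Set ℤ) (φ : ℤ → WithBot ℕ)
    (hext : IsExtSemiModule m h A φ μ) :
    ((Vset h A φ).ncard : ℚ) ≤ dval m h μ :=
  V_card_le_dval_general m h hh hcop μ hμ hsum A φ hext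
end

section
/- Let σ be a permutation of a finite multiset {μ₁ ≤ ... ≤ μ_h} of nonnegative integers, written as a vector μ̃ ∈ ℕ^h which is a rearrangement of the dominant vector μ. Then Σ_{i<j} max{μ̃ᵢ − μ̃ⱼ, 0} equals the number of lattice points (i, y) with 1 ≤ i ≤ h−1 lying strictly above the polygon of μ and on or below the polygon of μ̃. -/
open Finset

section PairSums

variable {ι : Type*} [Fintype ι] [LinearOrder ι]

theorem two_nsmul_sum_lt_add_sum_diag_of_symm {M : Type*} [AddCommMonoid M] (f : ι → ι → M)
    (hf : ∀ i j, f i j = f j i) :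
    2 • (∑ i, ∑ j, if i < j then f i j else 0) + ∑ i, f i i = ∑ i, ∑ j, f i j := by
  have split : ∀ i j, f i j =
      ((if i < j then f i j else 0) + if j < i then f j i else 0) + if i = j then f i j else 0 := by
    intro i j
    rcases lt_trichotomy i j with hij | rfl | hij
    · simp [hij, hij.not_gt, hij.ne]
    · simp
    · simp [hij, hij.not_gt, hij.ne', hf i j]
  rw [sum_congr rfl fun i _ => sum_congr rfl fun j _ => split i j]
  simp only [sum_add_distrib, sum_ite_eq, mem_univ, if_true]
  rw [sum_comm (f := fun i j => if j < i then f j i else 0), two_nsmul]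

theorem sum_lt_comp_perm_of_symm {M : Type*} [AddCommGroup M] [IsAddTorsionFree M]
    (f : ι → ι → M) (hf : ∀ i j, f i j = f j i) (σ : Equiv.Perm ι) :
    (∑ i, ∑ j, if i < j then f (σ i) (σ j) else 0) = ∑ i, ∑ j, if i < j then f i j else 0 := by
  have hσ := two_nsmul_sum_lt_add_sum_diag_of_symm (fun i j => f (σ i) (σ j)) fun i j => hf _ _
  have hfull : ∑ i, ∑ j, f (σ i) (σ j) = ∑ i, ∑ j, f i j :=
    (sum_congr rfl fun i _ => Equiv.sum_comp σ (f (σ i))).trans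
      (Equiv.sum_comp σ fun i => ∑ j, f i j)
  have hdiag : ∑ i, f (σ i) (σ i) = ∑ i, f i i := Equiv.sum_comp σ fun i => f i i
  refine nsmul_right_injective two_ne_zero (add_right_cancel (b := ∑ i, f i i) ?_)
  calc _ = ∑ i, ∑ j, f (σ i) (σ j) := by rw [← hdiag, hσ]
    _ = ∑ i, ∑ j, f i j := hfull
    _ = _ := (two_nsmul_sum_lt_add_sum_diag_of_symm f hf).symm

variable {α : Type*} [AddCommGroup α] [LinearOrder α] [IsOrderedAddMonoid α]

theorem sum_lt_max_sub_zero (a : ι → α) :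
    (∑ i, ∑ j, if i < j then max (a i - a j) 0 else 0) =
      (∑ i, ∑ j, if i < j then a i else 0) - ∑ i, ∑ j, if i < j then min (a i) (a j) else 0 := by
  simp only [← sum_sub_distrib]
  refine sum_congr rfl fun i _ => sum_congr rfl fun j _ => ?_
  split_ifs
  · rw [← max_sub_sub_left, sub_self, max_comm]
  · rw [sub_self]

omit [IsOrderedAddMonoid α] in
theorem sum_lt_min_of_monotone {a : ι → α} (ha : Monotone a) :
    (∑ i, ∑ j, if i < j then min (a i) (a j) else 0) = ∑ i, ∑ j, if i < j then a i else 0 := by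
  refine sum_congr rfl fun i _ => sum_congr rfl fun j _ => ?_
  split_ifs with hij
  exacts [min_eq_left (ha hij.le), rfl]

theorem sum_lt_max_sub_comp_perm_of_monotone {a : ι → α} (ha : Monotone a) (σ : Equiv.Perm ι) :
    (∑ i, ∑ j, if i < j then max (a (σ i) - a (σ j)) 0 else 0) =
      (∑ i, ∑ j, if i < j then a (σ i) else 0) - ∑ i, ∑ j, if i < j then a i else 0 := by
  refine (sum_lt_max_sub_zero (a ∘ σ)).trans ?_
  rw [← sum_lt_min_of_monotone ha]
  congr 1
  exact sum_lt_comp_perm_of_symm (fun i j => min (a i) (a j)) (fun _ _ => min_comm _ _) σ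

end PairSums

theorem Set.ncard_setOf_fst_mem_snd_mem {α β : Type*} (s : Finset α) (t : α → Finset β) :
    {p : α × β | p.1 ∈ s ∧ p.2 ∈ t p.1}.ncard = ∑ a ∈ s, (t a).card := by
  classical
  have : {p : α × β | p.1 ∈ s ∧ p.2 ∈ t p.1} = ↑(s.biUnion fun a => {a} ×ˢ t a) := by
    ext ⟨a, b⟩
    simp [and_comm]
  rw [this, Set.ncard_coe_finset, card_biUnion]
  · simp
  · intro a _ a' _ hne
    exact disjoint_product.mpr (Or.inl (Finset.disjoint_singleton.mpr hne))

section PartialSums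

variable {h : ℕ}

@[simp]
theorem psum_zero (μ : Fin h → ℕ) : psum μ 0 = 0 := by
  simp [psum]

theorem sum_range_psum (ψ : Fin h → ℕ) :
    ∑ k ∈ range h, psum ψ k = ∑ i, ∑ j, if i < j then ψ i else 0 := by
  rw [sum_range, sum_comm]
  simp only [psum, Fin.val_fin_lt]

theorem psum_le_psum_comp_perm {μ : Fin h → ℕ} (hμ : Monotone μ) (σ : Equiv.Perm (Fin h))
    (k : ℕ) : psum μ k ≤ psum (μ ∘ σ) k := by
  have hanti : Antivary (fun j : Fin h => if (j : ℕ) < k then 1 else 0) μ :=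
    Antitone.antivary (fun i j hij => by split_ifs <;> omega) hμ
  simpa [psum] using hanti.sum_mul_le_sum_mul_comp_perm (σ := σ)

theorem ncard_lattice_points_between_psum {μ ν : Fin h → ℕ} (hle : ∀ k, psum μ k ≤ psum ν k) :
    ({p : ℕ × ℤ | 1 ≤ p.1 ∧ p.1 ≤ h - 1 ∧ (psum μ p.1 : ℤ) < p.2 ∧
        p.2 ≤ (psum ν p.1 : ℤ)}.ncard : ℤ) = ∑ k ∈ range h, ((psum ν k : ℤ) - psum μ k) := by
  have hset : {p : ℕ × ℤ | 1 ≤ p.1 ∧ p.1 ≤ h - 1 ∧ (psum μ p.1 : ℤ) < p.2 ∧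
      p.2 ≤ (psum ν p.1 : ℤ)} = {p | p.1 ∈ Ico 1 h ∧ p.2 ∈ Ioc (psum μ p.1 : ℤ) (psum ν p.1)} := by
    ext p
    simp only [Set.mem_ofPred_eq, mem_Ico, mem_Ioc]
    omega
  rw [hset, Set.ncard_setOf_fst_mem_snd_mem (Ico 1 h) fun k => Ioc (psum μ k : ℤ) (psum ν k)]
  have hcolumn k : ((Ioc (psum μ k : ℤ) (psum ν k)).card : ℤ) = psum ν k - psum μ k := by
    rw [Int.card_Ioc, Int.toNat_of_nonneg (sub_nonneg.mpr (by exact_mod_cast hle k))]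
  push_cast [hcolumn]
  refine sum_subset (fun k hk => by simp only [mem_range, mem_Ico] at hk ⊢; omega)
    fun k hk hk' => ?_
  obtain rfl : k = 0 := by simp only [mem_range, mem_Ico] at hk hk'; omega
  simp

end PartialSums

theorem sum_max_eq_lattice_points_general (h : ℕ) (μ : Fin h → ℕ)
    (hμ : Monotone μ) (σ : Equiv.Perm (Fin h)) :
    (∑ i : Fin h, ∑ j : Fin h,
        if i < j then max ((μ (σ i) : ℤ) - μ (σ j)) 0 else 0) =
      ({p : ℕ × ℤ | 1 ≤ p.1 ∧ p.1 ≤ h - 1 ∧ (psum μ p.1 : ℤ) < p.2 ∧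
          p.2 ≤ (psum (μ ∘ σ) p.1 : ℤ)}.ncard : ℤ) := by
  rw [ncard_lattice_points_between_psum (psum_le_psum_comp_perm hμ σ)]
  calc (∑ i : Fin h, ∑ j : Fin h, if i < j then max ((μ (σ i) : ℤ) - μ (σ j)) 0 else 0)
      = (∑ i : Fin h, ∑ j : Fin h, if i < j then (μ (σ i) : ℤ) else 0) -
          ∑ i : Fin h, ∑ j : Fin h, if i < j then (μ i : ℤ) else 0 :=
        sum_lt_max_sub_comp_perm_of_monotone (a := fun i => (μ i : ℤ))
          (Nat.mono_cast.comp hμ) σ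
    _ = ∑ k ∈ range h, ((psum (μ ∘ σ) k : ℤ) - psum μ k) := by
        rw [sum_sub_distrib, ← Nat.cast_sum, ← Nat.cast_sum, sum_range_psum, sum_range_psum]
        push_cast
        rfl

/-- for a permutation `μ̃ = μ ∘ σ` of a dominant `μ`,
`Σ_{i<j} max(μ̃ᵢ - μ̃ⱼ, 0)` equals the number of lattice points `(i,y)`,
`1 ≤ i ≤ h-1`, strictly above the polygon of `μ` and on or below the polygon
of `μ̃`. -/
theorem sum_max_eq_lattice_points (h : ℕ) (hh : 0 < h) (μ : Fin h → ℕ)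
    (hμ : Monotone μ) (σ : Equiv.Perm (Fin h)) :
    (∑ i : Fin h, ∑ j : Fin h,
        if i < j then max ((μ (σ i) : ℤ) - μ (σ j)) 0 else 0) =
      ({p : ℕ × ℤ | 1 ≤ p.1 ∧ p.1 ≤ h - 1 ∧ (psum μ p.1 : ℤ) < p.2 ∧
          p.2 ≤ (psum (μ ∘ σ) p.1 : ℤ)}.ncard : ℤ) :=
  sum_max_eq_lattice_points_general h μ hμ σ
end

section
/- Let m, h be coprime, A a normalized semi-module for m, h with B = A \ (h+A) = {b̃₀ < b̃₁ < ... < b̃_{h−1}} sorted increasingly, and f: B → B the bijection bᵢ ↦ b_{i+1} (indices from the type recursion, b_h = b₀). Define μ̃ ∈ ℚ^h by f(b̃ᵢ) = b̃ᵢ + m − μ̃_{i+1} h. Then ν ⪯ μ̃, i.e., Σ_{i=1}^{i₀} μ̃ᵢ ≤ i₀ m/h for all i₀ < h and Σᵢ μ̃ᵢ = m. Equivalently, Σ_{i=0}^{i₀} f(b̃ᵢ) ≥ Σ_{i=0}^{i₀} b̃ᵢ for all i₀. -/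
/-!
Elements of `B` are pairwise incongruent modulo `h`, and `f x ≡ x + m (mod h)`, so `f` is
injective on `B`, hence a permutation of the finite set `B`. Consequently `f(b̃₀), …, f(b̃_{i₀})`
are `i₀ + 1` distinct elements of `B`, and their sum is at least that of the `i₀ + 1` smallest
ones, `b̃₀ + ⋯ + b̃_{i₀}`; for `i₀ = h - 1` the two sums agree. The statements about `μ̃` are
these inequalities divided by `h`.
-/

lemma add_natCast_mul_mem {h : ℤ} {A : Set ℤ} (hadd : ∀ a ∈ A, a + h ∈ A) {a : ℤ}
    (ha : a ∈ A) (k : ℕ) : a + k * h ∈ A := by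
  induction k with
  | zero => simpa using ha
  | succ k ih => simpa [add_mul, add_assoc] using hadd _ ih

lemma BSet.eq_of_dvd_sub {h : ℤ} {A : Set ℤ} (hadd : ∀ a ∈ A, a + h ∈ A) {x y : ℤ}
    (hx : x ∈ BSet h A) (hy : y ∈ BSet h A) (hxy : h ∣ y - x) : x = y := by
  obtain ⟨d, hd⟩ := hxy
  rcases lt_trichotomy d 0 with hneg | rfl | hpos
  · obtain ⟨k, hk⟩ : ∃ k : ℕ, d = -(k + 1) := ⟨(-d - 1).toNat, by omega⟩
    exact absurd (add_natCast_mul_mem hadd hy.1 k) (by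
      convert hx.2 using 2; rw [hk] at hd; linear_combination hd)
  · omega
  · obtain ⟨k, hk⟩ : ∃ k : ℕ, d = k + 1 := ⟨(d - 1).toNat, by omega⟩
    exact absurd (add_natCast_mul_mem hadd hx.1 k) (by
      convert hy.2 using 2; rw [hk] at hd; linear_combination -hd)

section SortedSums

variable {β : Type*} [AddCommMonoid β] {h : ℕ} {g : ℕ → β}

lemma Finset.sum_range_card_le_sum_of_monotoneOn [PartialOrder β] [IsOrderedAddMonoid β]
    (hg : MonotoneOn g (Set.Iio h)) {s : Finset ℕ} (hs : s ⊆ Finset.range h) :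
    ∑ i ∈ Finset.range s.card, g i ≤ ∑ i ∈ s, g i := by
  induction s using Finset.induction_on_max with
  | empty => simp
  | insert a s hlt ih =>
    have ha : a < h := Finset.mem_range.mp (hs (Finset.mem_insert_self a s))
    have hcard : s.card ≤ a := by
      simpa using Finset.card_le_card (fun x hx => Finset.mem_range.mpr (hlt x hx))
    rw [Finset.card_insert_of_notMem (fun has => (hlt a has).false),
      Finset.sum_range_succ, Finset.sum_insert (fun has => (hlt a has).false), add_comm]
    exact add_le_add (hg (hcard.trans_lt ha) ha hcard)
      (ih ((Finset.subset_insert a s).trans hs))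

variable {σ : ℕ → ℕ}

lemma sum_range_le_sum_range_comp [PartialOrder β] [IsOrderedAddMonoid β]
    (hmaps : Set.MapsTo σ (Set.Iio h) (Set.Iio h)) (hinj : Set.InjOn σ (Set.Iio h))
    (hg : MonotoneOn g (Set.Iio h)) {n : ℕ} (hn : n ≤ h) :
    ∑ i ∈ Finset.range n, g i ≤ ∑ i ∈ Finset.range n, g (σ i) := by
  have hinj' : Set.InjOn σ (Finset.range n : Set ℕ) := by
    simpa using hinj.mono (Set.Iio_subset_Iio hn)
  have himage : (Finset.range n).image σ ⊆ Finset.range h := by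
    simp only [Finset.image_subset_iff, Finset.mem_range]
    exact fun i hi => hmaps (show i < h by omega)
  simpa [Finset.sum_image hinj', Finset.card_image_of_injOn hinj'] using
    Finset.sum_range_card_le_sum_of_monotoneOn hg himage

lemma sum_range_comp_eq (hmaps : Set.MapsTo σ (Set.Iio h) (Set.Iio h))
    (hinj : Set.InjOn σ (Set.Iio h)) :
    ∑ i ∈ Finset.range h, g (σ i) = ∑ i ∈ Finset.range h, g i := by
  have hbij := ((Set.finite_Iio h).injOn_iff_bijOn_of_mapsTo hmaps).mp hinj
  refine Finset.sum_nbij σ (fun i hi => ?_) (by simpa using hinj)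
    (by simpa using hbij.surjOn) fun _ _ => rfl
  simpa using hmaps (Finset.mem_range.mp hi)

end SortedSums

lemma exists_index_map_of_injOn {h : ℕ} {B : Set ℤ} {bt : ℕ → ℤ} {f : ℤ → ℤ}
    (hbt : ∀ i < h, bt i ∈ B) (hbtsurj : ∀ x ∈ B, ∃ i < h, bt i = x)
    (hbtinj : Set.InjOn bt (Set.Iio h)) (hf : Set.MapsTo f B B) (hfinj : Set.InjOn f B) :
    ∃ σ : ℕ → ℕ, Set.MapsTo σ (Set.Iio h) (Set.Iio h) ∧ Set.InjOn σ (Set.Iio h) ∧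
      ∀ i < h, f (bt i) = bt (σ i) := by
  have hex : ∀ i, ∃ j, i < h → j < h ∧ bt j = f (bt i) := fun i => by
    by_cases hi : i < h
    · obtain ⟨j, hj, hbj⟩ := hbtsurj _ (hf (hbt i hi))
      exact ⟨j, fun _ => ⟨hj, hbj⟩⟩
    · exact ⟨0, fun h' => absurd h' hi⟩
  choose σ hσ using hex
  refine ⟨σ, fun i hi => (hσ i hi).1, fun i hi j hj hij => ?_, fun i hi => (hσ i hi).2.symm⟩
  have hfij : f (bt i) = f (bt j) := by rw [← (hσ i hi).2, ← (hσ j hj).2, hij]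
  exact hbtinj hi hj (hfinj (hbt i hi) (hbt j hj) hfij)

lemma sum_range_add_sub_div (x y : ℕ → ℤ) (c d : ℚ) (n : ℕ) :
    ∑ i ∈ Finset.range n, (((x i : ℚ) + c - y i) / d) =
      (((∑ i ∈ Finset.range n, x i - ∑ i ∈ Finset.range n, y i : ℤ) : ℚ) + n * c) / d := by
  rw [← Finset.sum_div]
  push_cast
  rw [Finset.sum_sub_distrib, Finset.sum_add_distrib]
  simp only [Finset.sum_const, Finset.card_range, nsmul_eq_mul]
  ring

theorem successor_map_dominance_general (m h : ℕ) (hh : 0 < h)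
    (A : Set ℤ) (hA : IsSemiModule m h A)
    (bt : ℕ → ℤ)
    (hbt : ∀ i < h, bt i ∈ BSet h A)
    (hbtmono : ∀ i j : ℕ, i < j → j < h → bt i < bt j)
    (hbtsurj : ∀ x ∈ BSet h A, ∃ i < h, bt i = x)
    (f : ℤ → ℤ)
    (hf : ∀ x ∈ BSet h A, f x ∈ BSet h A ∧ (h : ℤ) ∣ x + m - f x) :
    (∀ i₀ < h, ∑ i ∈ Finset.range (i₀ + 1), bt i ≤
        ∑ i ∈ Finset.range (i₀ + 1), f (bt i)) ∧
      (∀ i₀ < h, ∑ i ∈ Finset.range i₀, (((bt i : ℚ) + m - f (bt i)) / h) ≤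
        (i₀ * m : ℚ) / h) ∧
      ∑ i ∈ Finset.range h, (((bt i : ℚ) + m - f (bt i)) / h) = m := by
  have hfinj : Set.InjOn f (BSet h A) := fun x hx y hy hxy =>
    BSet.eq_of_dvd_sub hA.2.2.2 hx hy (by simpa [hxy] using dvd_sub (hf y hy).2 (hf x hx).2)
  have hbtstrict : StrictMonoOn bt (Set.Iio h) := fun i _ j hj hij => hbtmono i j hij hj
  obtain ⟨σ, hmaps, hσinj, hfσ⟩ := exists_index_map_of_injOn hbt hbtsurj hbtstrict.injOn
    (fun x hx => (hf x hx).1) hfinj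
  have hfσ' : ∀ n ≤ h, ∑ i ∈ Finset.range n, f (bt i) = ∑ i ∈ Finset.range n, bt (σ i) :=
    fun n hn => Finset.sum_congr rfl fun i hi => hfσ i ((Finset.mem_range.mp hi).trans_le hn)
  have hle : ∀ n ≤ h, ∑ i ∈ Finset.range n, bt i ≤ ∑ i ∈ Finset.range n, f (bt i) :=
    fun n hn => hfσ' n hn ▸ sum_range_le_sum_range_comp hmaps hσinj hbtstrict.monotoneOn hn
  have htotal : ∑ i ∈ Finset.range h, f (bt i) = ∑ i ∈ Finset.range h, bt i :=
    (hfσ' h le_rfl).trans (sum_range_comp_eq hmaps hσinj)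
  refine ⟨fun i₀ hi₀ => hle _ hi₀, fun i₀ hi₀ => ?_, ?_⟩
  · rw [sum_range_add_sub_div]
    have hdiff :
        ((∑ i ∈ Finset.range i₀, bt i - ∑ i ∈ Finset.range i₀, f (bt i) : ℤ) : ℚ) ≤ 0 := by
      exact_mod_cast sub_nonpos.mpr (hle i₀ hi₀.le)
    gcongr
    linarith
  · rw [sum_range_add_sub_div, htotal, sub_self, Int.cast_zero, zero_add]
    field_simp

/-- with `b̃₀ < … < b̃_{h-1}` the elements of `B` in increasing
order and `f : B → B` the successor map of the type recursion
(`f x ∈ B` with `f x ≡ x + m (mod h)`), one has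
`Σ_{i≤i₀} f(b̃ᵢ) ≥ Σ_{i≤i₀} b̃ᵢ` for all `i₀ < h`; equivalently for
`μ̃_{i+1} = (b̃ᵢ + m - f(b̃ᵢ))/h` one has `ν ⪯ μ̃`:
`Σ_{i=1}^{i₀} μ̃ᵢ ≤ i₀ m/h` for `i₀ < h` with total sum `m`. -/
theorem successor_map_dominance (m h : ℕ) (hm : 0 < m) (hh : 0 < h)
    (hcop : Nat.Coprime m h) (A : Set ℤ) (hA : IsSemiModule m h A)
    (hnorm : IsNormalized h A) (bt : ℕ → ℤ)
    (hbt : ∀ i < h, bt i ∈ BSet h A)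
    (hbtmono : ∀ i j : ℕ, i < j → j < h → bt i < bt j)
    (hbtsurj : ∀ x ∈ BSet h A, ∃ i < h, bt i = x)
    (f : ℤ → ℤ)
    (hf : ∀ x ∈ BSet h A, f x ∈ BSet h A ∧ (h : ℤ) ∣ x + m - f x) :
    (∀ i₀ < h, ∑ i ∈ Finset.range (i₀ + 1), bt i ≤
        ∑ i ∈ Finset.range (i₀ + 1), f (bt i)) ∧
      (∀ i₀ < h, ∑ i ∈ Finset.range i₀, (((bt i : ℚ) + m - f (bt i)) / h) ≤
        (i₀ * m : ℚ) / h) ∧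
      ∑ i ∈ Finset.range h, (((bt i : ℚ) + m - f (bt i)) / h) = m :=
  successor_map_dominance_general m h hh A hA bt hbt hbtmono hbtsurj f hf
end

section
/- Let m, h be coprime, A a semi-module for m, h with minimum element b₀ of B = A \ (h+A), and suppose A is normalized of type μ'. Then the number of integers a > b₀ with a ∉ A equals (Σ_{i=0}^{h−1} (bᵢ − b₀ − i))/h, where b₀,...,b_{h−1} are as in the type recursion; and this equals Σ_{i=0}^{h−1} Σ_{j=1}^{i} (m/h − μ'ⱼ) − (h−1)/2. -/
/-! In a semi-module closed under `+ h`, the part of `A` in the residue class of an element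
`c ∈ B` is exactly `c + ℕh`. Since `bᵢ ≡ b₀ + i m (mod h)` and `m` is invertible mod `h`, the
`bᵢ` with `i < h` are the elements of `B`, one in each residue class. The gaps above `b₀` in the
class of `bᵢ` are `bᵢ - h, bᵢ - 2h, …` down to `b₀`, so there are `⌊(bᵢ - b₀)/h⌋` of them, and
`h ⌊(bᵢ - b₀)/h⌋ = bᵢ - b₀ - (i m mod h)`; the remainders `i m mod h` run over `0, …, h - 1`.
The second formula follows by telescoping `bᵢ = b₀ + i m - (μ'₀ + ⋯ + μ'ᵢ₋₁) h`. -/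

open Finset

theorem Int.card_Ico_filter_modEq_right (a c : ℤ) {r : ℕ} (hr : 0 < r) :
    #{x ∈ Ico a c | x ≡ c [ZMOD r]} = ((c - a) / r).toNat := by
  rw [← Int.natCast_inj, Int.toNat_eq_max, Int.Ico_filter_modEq_card _ _ (by exact_mod_cast hr),
    sub_self, zero_div, Int.ceil_zero, zero_sub, ← Int.cast_sub, Int.cast_natCast,
    Rat.ceil_intCast_div_natCast, neg_neg, neg_sub]

theorem Nat.Coprime.bijOn_mul_mod {m h : ℕ} (hcop : m.Coprime h) :
    Set.BijOn (fun i => i * m % h) (range h) (range h) := by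
  have hmaps : Set.MapsTo (fun i => i * m % h) (range h) (range h) := fun i hi =>
    mem_range.2 (Nat.mod_lt _ (pos_of_ne_zero (by rintro rfl; simp at hi)))
  have hinj : Set.InjOn (fun i => i * m % h) (range h) := fun i hi j hj hij =>
    (Nat.ModEq.cancel_right_of_coprime (Nat.coprime_comm.1 hcop) hij).eq_of_lt_of_lt
      (mem_range.1 hi) (mem_range.1 hj)
  exact ⟨hmaps, hinj, surjOn_of_injOn_of_card_le _ hmaps hinj le_rfl⟩

theorem Nat.Coprime.sum_range_mul_mod {m h : ℕ} (hcop : m.Coprime h) :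
    ∑ i ∈ range h, i * m % h = ∑ i ∈ range h, i :=
  sum_nbij _ hcop.bijOn_mul_mod.mapsTo hcop.bijOn_mul_mod.injOn hcop.bijOn_mul_mod.surjOn
    fun _ _ => rfl

theorem Nat.Coprime.existsUnique_modEq_add_mul {m h : ℕ} (hcop : m.Coprime h) (hh : 0 < h)
    (a x : ℤ) : ∃! i, i < h ∧ x ≡ a + i * m [ZMOD h] := by
  obtain ⟨i, hi, hir⟩ := hcop.bijOn_mul_mod.surjOn
    (mem_range.2 (show ((x - a) % h).toNat < h by
      have := Int.emod_lt_of_pos (x - a) (Int.natCast_pos.2 hh); omega))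
  have hxi : x ≡ a + i * m [ZMOD h] := by
    have : x - a ≡ i * m [ZMOD h] := by
      change (x - a) % h = (i * m : ℤ) % h
      rw [← Int.toNat_of_nonneg (Int.emod_nonneg _ (by omega)), ← hir]
      push_cast; rfl
    simpa using this.add_left a
  refine ⟨i, ⟨mem_range.1 hi, hxi⟩, fun j ⟨hj, hxj⟩ => ?_⟩
  have : ((j * m : ℕ) : ℤ) ≡ (i * m : ℕ) [ZMOD h] := by
    push_cast; exact (hxj.symm.trans hxi).add_left_cancel' a
  exact hcop.bijOn_mul_mod.injOn (mem_range.2 hj) hi (Int.natCast_modEq_iff.1 this)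

theorem add_mul_mem_of_add_mem {A : Set ℤ} {h : ℤ} (hA : ∀ a ∈ A, a + h ∈ A) {a : ℤ}
    (ha : a ∈ A) (k : ℕ) : a + k * h ∈ A := by
  induction k with
  | zero => simpa using ha
  | succ k ih => simpa [add_mul, ← add_assoc] using hA _ ih

theorem mem_iff_le_of_modEq {A : Set ℤ} {h : ℤ} (hh : 0 < h) (hA : ∀ a ∈ A, a + h ∈ A)
    {c x : ℤ} (hc : c ∈ BSet h A) (hx : x ≡ c [ZMOD h]) : x ∈ A ↔ c ≤ x := by
  obtain ⟨t, ht⟩ := hx.dvd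
  constructor
  · intro hxA
    by_contra! hlt
    have ht1 : 1 ≤ t := by nlinarith
    refine hc.2 ?_
    obtain ⟨k, hk⟩ : ∃ k : ℕ, t - 1 = k := ⟨(t - 1).toNat, by omega⟩
    convert add_mul_mem_of_add_mem hA hxA k using 1
    rw [← hk]; linarith
  · intro hle
    have ht0 : t ≤ 0 := by nlinarith
    obtain ⟨k, hk⟩ : ∃ k : ℕ, -t = k := ⟨(-t).toNat, by omega⟩
    convert add_mul_mem_of_add_mem hA hc.1 k using 1
    rw [← hk]; linarith

theorem ncard_setOf_le_and_notMem {A : Set ℤ} {h : ℕ} (hh : 0 < h) (hA : ∀ a ∈ A, a + h ∈ A)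
    {n : ℕ} {c : ℕ → ℤ} (hc : ∀ i < n, c i ∈ BSet h A)
    (hres : ∀ x, ∃! i, i < n ∧ x ≡ c i [ZMOD h]) (a₀ : ℤ) :
    {x | a₀ ≤ x ∧ x ∉ A}.ncard = ∑ i ∈ range n, ((c i - a₀) / h).toNat := by
  have hmem : ∀ i < n, ∀ x, x ≡ c i [ZMOD h] → (x ∈ A ↔ c i ≤ x) := fun i hi x hx =>
    mem_iff_le_of_modEq (by exact_mod_cast hh) hA (hc i hi) hx
  have hgaps : {x | a₀ ≤ x ∧ x ∉ A} =
      ↑((range n).biUnion fun i => {x ∈ Ico a₀ (c i) | x ≡ c i [ZMOD h]}) := by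
    ext x
    simp only [Set.mem_ofPred_eq, coe_biUnion, coe_filter, coe_range, Set.mem_Iio, mem_Ico,
      Set.mem_iUnion, exists_prop]
    constructor
    · rintro ⟨hx₀, hxA⟩
      obtain ⟨i, ⟨hi, hxi⟩, -⟩ := hres x
      exact ⟨i, hi, ⟨hx₀, not_le.1 fun hle => hxA ((hmem i hi x hxi).2 hle)⟩, hxi⟩
    · rintro ⟨i, hi, ⟨hx₀, hxc⟩, hxi⟩
      exact ⟨hx₀, fun hxA => hxc.not_ge ((hmem i hi x hxi).1 hxA)⟩
  rw [hgaps, Set.ncard_coe_finset, card_biUnion]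
  · exact sum_congr rfl fun i _ => Int.card_Ico_filter_modEq_right _ _ hh
  · intro i hi j hj hij
    refine disjoint_left.2 fun x hxi hxj => hij ?_
    exact (hres x).unique ⟨mem_range.1 hi, (mem_filter.1 hxi).2⟩
      ⟨mem_range.1 hj, (mem_filter.1 hxj).2⟩

theorem mul_ncard_gaps_eq_sum {A : Set ℤ} {m h : ℕ} (hh : 0 < h) (hcop : m.Coprime h)
    (hA : ∀ a ∈ A, a + h ∈ A) {c : ℕ → ℤ} (hc : ∀ i < h, c i ∈ BSet h A)
    (hmin : ∀ i < h, c 0 ≤ c i) (hmod : ∀ i < h, c i ≡ c 0 + i * m [ZMOD h]) :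
    (h : ℤ) * {x | c 0 < x ∧ x ∉ A}.ncard = ∑ i ∈ range h, (c i - c 0 - i) := by
  have hres : ∀ x, ∃! i, i < h ∧ x ≡ c i [ZMOD h] := by
    intro x
    obtain ⟨i, ⟨hi, hxi⟩, huniq⟩ := hcop.existsUnique_modEq_add_mul hh (c 0) x
    exact ⟨i, ⟨hi, hxi.trans (hmod i hi).symm⟩,
      fun j ⟨hj, hxj⟩ => huniq j ⟨hj, hxj.trans (hmod j hj)⟩⟩
  have hgaps : {x | c 0 < x ∧ x ∉ A} = {x | c 0 ≤ x ∧ x ∉ A} := by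
    ext x
    exact and_congr_left fun hx => ⟨le_of_lt, fun hle => lt_of_le_of_ne hle
      (by rintro rfl; exact hx (hc 0 hh).1)⟩
  rw [hgaps, ncard_setOf_le_and_notMem hh hA hc hres, Nat.cast_sum, mul_sum]
  calc ∑ i ∈ range h, (h : ℤ) * (((c i - c 0) / h).toNat : ℤ)
      = ∑ i ∈ range h, (c i - c 0 - ((i * m % h : ℕ) : ℤ)) := sum_congr rfl fun i hi => ?_
    _ = ∑ i ∈ range h, (c i - c 0 - i) := by
      rw [sum_sub_distrib, ← Nat.cast_sum, hcop.sum_range_mul_mod, Nat.cast_sum,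
        ← sum_sub_distrib]
  have hi' := mem_range.1 hi
  have hrem : (c i - c 0) % h = ((i * m % h : ℕ) : ℤ) := by
    push_cast
    simpa using ((hmod i hi').sub_right (c 0)).eq
  rw [Int.toNat_of_nonneg (Int.ediv_nonneg (sub_nonneg.2 (hmin i hi')) (by positivity)), ← hrem,
    Int.emod_def]
  ring

theorem mem_BSet_of_type_recursion {A : Set ℤ} {m h : ℕ} {μ' : Fin h → ℕ} {b : ℕ → ℤ}
    (hb0 : b 0 ∈ BSet h A)
    (hrec : ∀ i : Fin h, b (i + 1) = b i + m - μ' i * h ∧ b (i + 1) ∈ A ∧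
      b i + m - (μ' i + 1) * h ∉ A) {i : ℕ} (hi : i ≤ h) :
    b i ∈ BSet h A := by
  rcases i with _ | i
  · exact hb0
  · obtain ⟨hbi, hmem, hnot⟩ := hrec ⟨i, by omega⟩
    refine ⟨hmem, fun hprev => hnot ?_⟩
    convert hprev using 1
    rw [hbi]; ring

theorem psum_succ {h : ℕ} (μ : Fin h → ℕ) {i : ℕ} (hi : i < h) :
    psum μ (i + 1) = psum μ i + μ ⟨i, hi⟩ := by
  have key : ∀ j : Fin h, (if (j : ℕ) < i + 1 then μ j else 0) =
      (if (j : ℕ) < i then μ j else 0) + (if j = ⟨i, hi⟩ then μ j else 0) := by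
    intro j
    simp only [Fin.ext_iff]
    split_ifs <;> omega
  simp only [psum, key, sum_add_distrib, sum_ite_eq', mem_univ, if_true]

theorem eq_add_mul_sub_psum_mul {m h : ℕ} {μ : Fin h → ℕ} {b : ℕ → ℤ}
    (hb : ∀ i : Fin h, b (i + 1) = b i + m - μ i * h) {i : ℕ} (hi : i ≤ h) :
    b i = b 0 + i * m - psum μ i * h := by
  induction i with
  | zero => simp [psum]
  | succ i ih =>
    rw [hb ⟨i, hi⟩, ih (by omega), psum_succ μ hi]
    push_cast; ring

theorem mul_dval (m h : ℕ) (μ : Fin h → ℕ) :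
    (h : ℚ) * dval m h μ = ∑ i ∈ range h, ((i * m : ℚ) - psum μ i * h - i) := by
  rcases Nat.eq_zero_or_pos h with rfl | hh
  · simp
  have hgauss : ∑ i ∈ range h, (i : ℚ) = h * (h - 1) / 2 := by
    have := congrArg (Nat.cast : ℕ → ℚ) (sum_range_id_mul_two h)
    push_cast [Nat.cast_sub hh] at this
    linarith
  have hh' : (h : ℚ) ≠ 0 := by positivity
  rw [dval, mul_sub, mul_sum, sum_sub_distrib, hgauss]
  congr 1
  · exact sum_congr rfl fun i _ => by field_simp
  · ring

theorem gaps_count_general (m h : ℕ) (hh : 0 < h)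
    (hcop : Nat.Coprime m h) (A : Set ℤ) (hA : IsSemiModule m h A)
    (μ' : Fin h → ℕ) (b : ℕ → ℤ)
    (hb0 : b 0 ∈ BSet h A) (hb0min : ∀ x ∈ BSet h A, b 0 ≤ x)
    (hrec : ∀ i : Fin h,
      b (i + 1) = b i + m - μ' i * h ∧ b (i + 1) ∈ A ∧
        b i + m - (μ' i + 1) * h ∉ A) :
    (h : ℤ) * ({a : ℤ | b 0 < a ∧ a ∉ A}.ncard : ℤ) =
        (∑ i ∈ Finset.range h, (b i - b 0 - i)) ∧
      (({a : ℤ | b 0 < a ∧ a ∉ A}.ncard : ℚ)) = dval m h μ' := by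
  have htel : ∀ i ≤ h, b i = b 0 + i * m - psum μ' i * h :=
    fun i hi => eq_add_mul_sub_psum_mul (fun i => (hrec i).1) hi
  have hB : ∀ i < h, b i ∈ BSet h A := fun i hi => mem_BSet_of_type_recursion hb0 hrec hi.le
  have hcount := mul_ncard_gaps_eq_sum hh hcop hA.2.2.2 hB (fun i hi => hb0min _ (hB i hi))
    (fun i hi => Int.modEq_iff_dvd.2 ⟨psum μ' i, by rw [htel i hi.le]; ring⟩)
  refine ⟨hcount, mul_left_cancel₀ (Nat.cast_ne_zero.2 hh.ne' : (h : ℚ) ≠ 0) ?_⟩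
  have hcount_rat : (h : ℚ) * ({a : ℤ | b 0 < a ∧ a ∉ A}.ncard : ℚ) =
      ∑ i ∈ range h, ((b i - b 0 - i : ℤ) : ℚ) := by exact_mod_cast hcount
  rw [hcount_rat, mul_dval]
  refine sum_congr rfl fun i hi => ?_
  rw [htel i (mem_range.1 hi).le]
  push_cast; ring

/-- the number of integers `a > b₀` with `a ∉ A` equals
`(Σ_{i=0}^{h-1} (bᵢ - b₀ - i))/h`, which equals
`Σ_{i=0}^{h-1} Σ_{j=1}^{i} (m/h - μ'ⱼ) - (h-1)/2`. -/
theorem gaps_count (m h : ℕ) (hm : 0 < m) (hh : 0 < h)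
    (hcop : Nat.Coprime m h) (A : Set ℤ) (hA : IsSemiModule m h A)
    (hnorm : IsNormalized h A) (μ' : Fin h → ℕ) (b : ℕ → ℤ)
    (hb0 : b 0 ∈ BSet h A) (hb0min : ∀ x ∈ BSet h A, b 0 ≤ x)
    (hrec : ∀ i : Fin h,
      b (i + 1) = b i + m - μ' i * h ∧ b (i + 1) ∈ A ∧
        b i + m - (μ' i + 1) * h ∉ A) :
    (h : ℤ) * ({a : ℤ | b 0 < a ∧ a ∉ A}.ncard : ℤ) =
        (∑ i ∈ Finset.range h, (b i - b 0 - i)) ∧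
      (({a : ℤ | b 0 < a ∧ a ∉ A}.ncard : ℚ)) = dval m h μ' :=
  gaps_count_general m h hh hcop A hA μ' b hb0 hb0min hrec
end
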